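/- Let ρ_X be an n×n and ρ_Y an m×m Hermitian positive semidefinite complex matrix, each with trace one, and let ρ_XY = ρ_X ⊗ ρ_Y be their Kronecker product. Then the conditional quantum min-entropy of the product state equals the min-entropy of the first factor: sup over m×m trace-one positive semidefinite σ_Y of ( -log₂ min{λ : λ·(I_n ⊗ σ_Y) - ρ_X ⊗ ρ_Y is positive semidefinite} ) = -log₂ λ_max(ρ_X), and the supremum is attained at σ_Y = ρ_Y. -/

import Mathlib

open Matrix Kronecker ComplexOrder

/-! Compressing `l • (1 ⊗ σ) - ρX ⊗ ρY` by `v ⊗ 1`, for a unit eigenvector `v` of `ρX` with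
eigenvalue `μ`, gives the positive semidefinite matrix `l • σ - μ • ρY`, whose trace `l - μ` is
therefore nonnegative: every feasible `l` is at least `λ_max(ρX)`, whatever `σ`. For `σ = ρY` the
matrix factors as `(λ_max • 1 - ρX) ⊗ ρY`, so `λ_max` itself is feasible. -/

namespace Matrix

variable {𝕜 ι κ : Type*} [RCLike 𝕜] [Fintype ι] [Fintype κ]

lemma nonempty_of_trace_ne_zero {R : Type*} [AddCommMonoid R] {A : Matrix ι ι R}
    (h : A.trace ≠ 0) : Nonempty ι := by
  by_contra hι
  rw [not_nonempty_iff] at hι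
  exact h (by simp [trace])

open MatrixOrder in
lemma IsHermitian.posSemidef_smul_one_sub [DecidableEq ι] {A : Matrix ι ι 𝕜}
    (hA : A.IsHermitian) {t : ℝ} (ht : ∀ i, hA.eigenvalues i ≤ t) :
    ((t : 𝕜) • 1 - A).PosSemidef := by
  have hle : A ≤ algebraMap ℝ (Matrix ι ι 𝕜) t := le_algebraMap_of_spectrum_le
    (by rw [hA.spectrum_real_eq_range_eigenvalues]; rintro _ ⟨i, rfl⟩; exact ht i)
    hA.isSelfAdjoint
  rwa [le_iff, Algebra.algebraMap_eq_smul_one, RCLike.real_smul_eq_coe_smul (K := 𝕜)] at hle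

omit [Fintype ι] [Fintype κ] in
lemma sub_kronecker {R ι' κ' : Type*} [Ring R] (A B : Matrix ι ι' R) (C : Matrix κ κ' R) :
    (A - B) ⊗ₖ C = A ⊗ₖ C - B ⊗ₖ C := by
  ext
  simp [sub_mul]

lemma conjTranspose_kronecker_one_mul_kronecker_mul_kronecker_one {ι' : Type*} [Fintype ι']
    [DecidableEq κ] (C : Matrix ι ι' 𝕜) (A : Matrix ι ι 𝕜) (B : Matrix κ κ 𝕜) :
    (C ⊗ₖ (1 : Matrix κ κ 𝕜))ᴴ * (A ⊗ₖ B) * (C ⊗ₖ (1 : Matrix κ κ 𝕜)) = (Cᴴ * A * C) ⊗ₖ B := by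
  rw [conjTranspose_kronecker, conjTranspose_one, ← mul_kronecker_mul, ← mul_kronecker_mul,
    one_mul, mul_one]

lemma trace_conjTranspose_replicateCol_mul_mul (A : Matrix ι ι 𝕜) (v : ι → 𝕜) :
    ((replicateCol Unit v)ᴴ * A * replicateCol Unit v).trace = star v ⬝ᵥ A *ᵥ v := by
  rw [dotProduct_mulVec]
  simp [trace, mul_apply, vecMul, dotProduct]

lemma IsHermitian.star_eigenvectorBasis_dotProduct_self [DecidableEq ι] {A : Matrix ι ι 𝕜}
    (hA : A.IsHermitian) (i : ι) :
    star ⇑(hA.eigenvectorBasis i) ⬝ᵥ ⇑(hA.eigenvectorBasis i) = 1 := by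
  have h := orthonormal_iff_ite.mp hA.eigenvectorBasis.orthonormal i i
  rwa [if_pos rfl, EuclideanSpace.inner_eq_star_dotProduct, dotProduct_comm] at h

lemma IsHermitian.eigenvalues_le_of_posSemidef_smul_one_kronecker_sub [DecidableEq ι]
    [DecidableEq κ] {A : Matrix ι ι 𝕜} (hA : A.IsHermitian) {B σ : Matrix κ κ 𝕜}
    (hB : B.trace = 1) (hσ : σ.trace = 1) {l : ℝ}
    (h : ((l : 𝕜) • ((1 : Matrix ι ι 𝕜) ⊗ₖ σ) - A ⊗ₖ B).PosSemidef) (i : ι) :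
    hA.eigenvalues i ≤ l := by
  let P := replicateCol Unit ⇑(hA.eigenvectorBasis i) ⊗ₖ (1 : Matrix κ κ 𝕜)
  have htrace : (Pᴴ * ((l : 𝕜) • ((1 : Matrix ι ι 𝕜) ⊗ₖ σ) - A ⊗ₖ B) * P).trace =
      ((l - hA.eigenvalues i : ℝ) : 𝕜) := by
    rw [← smul_kronecker, Matrix.mul_sub, Matrix.sub_mul, trace_sub,
      conjTranspose_kronecker_one_mul_kronecker_mul_kronecker_one,
      conjTranspose_kronecker_one_mul_kronecker_mul_kronecker_one,
      trace_kronecker, trace_kronecker, trace_conjTranspose_replicateCol_mul_mul,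
      trace_conjTranspose_replicateCol_mul_mul, hA.mulVec_eigenvectorBasis, smul_mulVec,
      one_mulVec]
    simp only [dotProduct_smul, hA.star_eigenvectorBasis_dotProduct_self, hB, hσ,
      RCLike.real_smul_eq_coe_smul (K := 𝕜), smul_eq_mul, RCLike.ofReal_sub]
    ring
  have hcompressed := (h.conjTranspose_mul_mul_same P).trace_nonneg
  rwa [htrace, RCLike.ofReal_nonneg, sub_nonneg] at hcompressed

lemma posSemidef_smul_one_kronecker_sub_kronecker [DecidableEq ι] [DecidableEq κ]
    {A : Matrix ι ι 𝕜} (hA : A.IsHermitian) {B : Matrix κ κ 𝕜} (hB : B.PosSemidef) {t : ℝ}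
    (ht : ∀ i, hA.eigenvalues i ≤ t) :
    ((t : 𝕜) • ((1 : Matrix ι ι 𝕜) ⊗ₖ B) - A ⊗ₖ B).PosSemidef := by
  rw [← smul_kronecker, ← sub_kronecker]
  exact (hA.posSemidef_smul_one_sub ht).kronecker hB

lemma IsHermitian.sum_eigenvalues_eq_one [DecidableEq ι] {A : Matrix ι ι 𝕜} (hA : A.IsHermitian)
    (htr : A.trace = 1) : ∑ i, hA.eigenvalues i = 1 := by
  have h := hA.trace_eq_sum_eigenvalues
  rw [htr] at h
  exact_mod_cast h.symm

lemma IsHermitian.iSup_eigenvalues_pos [DecidableEq ι] {A : Matrix ι ι 𝕜} (hA : A.IsHermitian)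
    (htr : A.trace = 1) : 0 < ⨆ i, hA.eigenvalues i := by
  obtain ⟨i, -, hi⟩ : ∃ i ∈ Finset.univ, (0 : ℝ) < hA.eigenvalues i :=
    Finset.exists_lt_of_sum_lt (by simp [hA.sum_eigenvalues_eq_one htr])
  exact hi.trans_le (le_ciSup (Finite.bddAbove_range _) i)

lemma PosSemidef.iSup_eigenvalues_le_one [DecidableEq ι] {A : Matrix ι ι 𝕜} (hA : A.PosSemidef)
    (htr : A.trace = 1) : ⨆ i, hA.isHermitian.eigenvalues i ≤ 1 :=
  Real.iSup_le (fun i => hA.isHermitian.sum_eigenvalues_eq_one htr ▸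
    Finset.single_le_sum (fun j _ => hA.eigenvalues_nonneg j) (Finset.mem_univ i)) zero_le_one

end Matrix

/-- The empty case needs `a ≤ 1`: there `sInf ∅ = 0` and `Real.logb b 0 = 0`. -/
lemma neg_logb_sInf_le_of_forall_le {b a : ℝ} {S : Set ℝ} (hb : 1 < b) (ha₀ : 0 < a)
    (ha₁ : a ≤ 1) (hS : ∀ l ∈ S, a ≤ l) : -Real.logb b (sInf S) ≤ -Real.logb b a := by
  rcases S.eq_empty_or_nonempty with rfl | hne
  · rw [Real.sInf_empty, Real.logb_zero, neg_zero, neg_nonneg]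
    exact Real.logb_nonpos hb ha₀.le ha₁
  · exact neg_le_neg (Real.logb_le_logb_of_le hb ha₀ (le_csInf hne hS))

theorem quantum_condMinEntropy_product_state_general (n m : ℕ)
    (ρX : Matrix (Fin n) (Fin n) ℂ) (hX : ρX.PosSemidef) (htrX : ρX.trace = 1)
    (ρY : Matrix (Fin m) (Fin m) ℂ) (hY : ρY.PosSemidef) (htrY : ρY.trace = 1) :
    IsGreatest {v : ℝ | ∃ σ : Matrix (Fin m) (Fin m) ℂ, σ.PosSemidef ∧ σ.trace = 1 ∧
          v = -Real.logb 2 (sInf {l : ℝ |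
            ((l : ℂ) • ((1 : Matrix (Fin n) (Fin n) ℂ) ⊗ₖ σ) - ρX ⊗ₖ ρY).PosSemidef})}
        (-Real.logb 2 (⨆ i, hX.isHermitian.eigenvalues i)) ∧
      -Real.logb 2 (sInf {l : ℝ |
          ((l : ℂ) • ((1 : Matrix (Fin n) (Fin n) ℂ) ⊗ₖ ρY) - ρX ⊗ₖ ρY).PosSemidef})
        = -Real.logb 2 (⨆ i, hX.isHermitian.eigenvalues i) := by
  have : Nonempty (Fin n) := nonempty_of_trace_ne_zero (htrX ▸ one_ne_zero)
  have hlower : ∀ σ : Matrix (Fin m) (Fin m) ℂ, σ.trace = 1 → ∀ l ∈ {l : ℝ |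
      ((l : ℂ) • ((1 : Matrix (Fin n) (Fin n) ℂ) ⊗ₖ σ) - ρX ⊗ₖ ρY).PosSemidef},
      ⨆ i, hX.isHermitian.eigenvalues i ≤ l := fun σ hσ l hl =>
    ciSup_le (hX.isHermitian.eigenvalues_le_of_posSemidef_smul_one_kronecker_sub htrY hσ hl)
  have hattained : sInf {l : ℝ |
      ((l : ℂ) • ((1 : Matrix (Fin n) (Fin n) ℂ) ⊗ₖ ρY) - ρX ⊗ₖ ρY).PosSemidef} =
      ⨆ i, hX.isHermitian.eigenvalues i :=
    IsLeast.csInf_eq ⟨posSemidef_smul_one_kronecker_sub_kronecker hX.isHermitian hY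
      (le_ciSup (Finite.bddAbove_range _)), hlower ρY htrY⟩
  refine ⟨⟨⟨ρY, hY, htrY, by rw [hattained]⟩, ?_⟩, by rw [hattained]⟩
  rintro _ ⟨σ, -, hσ, rfl⟩
  exact neg_logb_sInf_le_of_forall_le one_lt_two (hX.isHermitian.iSup_eigenvalues_pos htrX)
    (hX.iSup_eigenvalues_le_one htrX) (hlower σ hσ)

/-- For trace-one positive semidefinite `ρ_X` (n×n) and `ρ_Y` (m×m), the
conditional quantum min-entropy of the product state `ρ_X ⊗ ρ_Y`, i.e. the supremum over
trace-one PSD `σ_Y` of `-log₂ min{λ : λ·(I ⊗ σ_Y) - ρ_X ⊗ ρ_Y PSD}`, equals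
`-log₂ λ_max(ρ_X)`, and the supremum is attained at `σ_Y = ρ_Y`. -/
theorem quantum_condMinEntropy_product_state (n m : ℕ) (hn : 0 < n) (hm : 0 < m)
    (ρX : Matrix (Fin n) (Fin n) ℂ) (hX : ρX.PosSemidef) (htrX : ρX.trace = 1)
    (ρY : Matrix (Fin m) (Fin m) ℂ) (hY : ρY.PosSemidef) (htrY : ρY.trace = 1) :
    IsGreatest {v : ℝ | ∃ σ : Matrix (Fin m) (Fin m) ℂ, σ.PosSemidef ∧ σ.trace = 1 ∧
          v = -Real.logb 2 (sInf {l : ℝ |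
            ((l : ℂ) • ((1 : Matrix (Fin n) (Fin n) ℂ) ⊗ₖ σ) - ρX ⊗ₖ ρY).PosSemidef})}
        (-Real.logb 2 (⨆ i, hX.isHermitian.eigenvalues i)) ∧
      -Real.logb 2 (sInf {l : ℝ |
          ((l : ℂ) • ((1 : Matrix (Fin n) (Fin n) ℂ) ⊗ₖ ρY) - ρX ⊗ₖ ρY).PosSemidef})
        = -Real.logb 2 (⨆ i, hX.isHermitian.eigenvalues i) :=
  quantum_condMinEntropy_product_state_general n m ρX hX htrX ρY hY htrY
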